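/- For k ≥ 2, in Δ^L_{k,1} with the edge a_1–b_1 and/or the edge a_1–b_{k+1} removed, the distance from c to b_1 (respectively b_{k+1}) becomes 3 when the respective edge is removed and the graph has diameter 3; moreover with the partition ρ_1 ∪ ρ_2 = {c, a_1,…,a_k} and ρ_3 ∪ ρ_4 equal to the b-vertices one has |ρ_1 ∪ ρ_2| = k+1, |ρ_3 ∪ ρ_4| = k+1, and k+1 < 2^(k+1), violating the diameter-three bound |ρ_3 ∪ ρ_4| ≥ 2^{|ρ_1 ∪ ρ_2|}. -/

import Mathlib

/-
The only common neighbour of `c` and `b₁`, and of `c` and `b_{k+1}`, is `a₁`; deleting the edge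
from `a₁` to that `b` therefore leaves neither an edge nor a common neighbour, so the distance is
at least 3, and `c – a₂ – b₂ – b₁` (resp. `c – a₁ – b₁ – b_{k+1}`) survives the deletion.
Indices are shifted down by one from the paper: `a₁ = V.a 0`, `b₁ = V.b 0`,
`b_{k+1} = V.b (Fin.last k)`.
-/

inductive V (k n : ℕ) where
  | c : V k n
  | a : Fin k → V k n
  | b : Fin (k + n) → V k n
deriving DecidableEq, Fintype

def adj (k n : ℕ) : V k n → V k n → Prop
  | .a i, .a j => i ≠ j
  | .b i, .b j => i ≠ j
  | .a i, .b j => (j : ℕ) = (i : ℕ) ∨ (j : ℕ) = k + i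
  | .b j, .a i => (j : ℕ) = (i : ℕ) ∨ (j : ℕ) = k + i
  | .c, .a _ => True
  | .a _, .c => True
  | _, _ => False

instance (k n : ℕ) : DecidableRel (adj k n) := fun x y => by
  cases x <;> cases y <;> simp only [adj] <;> infer_instance

def DeltaL (k n : ℕ) : SimpleGraph (V k n) where
  Adj := adj k n
  symm := by
    constructor
    intro x y h
    cases x <;> cases y <;> simp_all [adj] <;> tauto
  loopless := by
    constructor
    intro x h
    cases x <;> simp_all [adj]

namespace SimpleGraph

variable {α : Type*} {G : SimpleGraph α} {u v w : α}

theorem dist_eq_three_of_adj (huv : u ≠ v) (hadj : ¬G.Adj u v)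
    (hcommon : G.commonNeighbors u v = ∅) {x y : α} (hux : G.Adj u x) (hxy : G.Adj x y)
    (hyv : G.Adj y v) : G.dist u v = 3 := by
  have hlt : 2 < G.edist u v := two_lt_edist_iff.mpr ⟨huv, hadj, hcommon⟩
  have hle : G.edist u v ≤ 3 := by
    simpa using (Walk.cons hux (.cons hxy (.cons hyv .nil))).edist_le
  have h3 : G.edist u v = 3 := le_antisymm hle (Order.add_one_le_of_lt hlt)
  rw [dist, h3]
  rfl

theorem commonNeighbors_deleteEdges_eq_empty {s : Set (Sym2 α)}
    (hw : G.commonNeighbors u v ⊆ {w}) (hs : s(w, v) ∈ s) :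
    (G.deleteEdges s).commonNeighbors u v = ∅ := by
  refine Set.eq_empty_of_forall_notMem fun z hz => ?_
  rw [(G.deleteEdges s).mem_commonNeighbors, deleteEdges_adj, deleteEdges_adj] at hz
  obtain rfl : z = w := hw (G.mem_commonNeighbors.mpr ⟨hz.1.1, hz.2.1⟩)
  exact hz.2.2 (Sym2.eq_swap ▸ hs)

end SimpleGraph

namespace DeltaL

variable {k n : ℕ}

theorem commonNeighbors_c_b_subset (hk : 0 < k) {j : Fin (k + n)}
    (hj : (DeltaL k n).Adj (.a ⟨0, hk⟩) (.b j)) :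
    (DeltaL k n).commonNeighbors .c (.b j) ⊆ {.a ⟨0, hk⟩} := by
  intro z hz
  rw [SimpleGraph.mem_commonNeighbors] at hz
  obtain ⟨hcz, hzb⟩ := hz
  cases z with
  | a i =>
    have hi : (i : ℕ) = 0 := by
      simp only [DeltaL, adj] at hj hzb
      omega
    simp [Fin.ext_iff, hi]
  | _ => simp [DeltaL, adj] at hcz

theorem ncard_c_or_a : {z : V k n | z = .c ∨ ∃ i, z = .a i}.ncard = k + 1 := by
  have hset : {z : V k n | z = .c ∨ ∃ i, z = .a i} = insert .c (Set.range .a) := by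
    ext z; simp [eq_comm]
  rw [hset, Set.ncard_insert_of_notMem (by simp),
    Set.ncard_range_of_injective fun _ _ h => V.a.inj h, Nat.card_eq_fintype_card,
    Fintype.card_fin]

theorem ncard_b : {z : V k n | ∃ j, z = .b j}.ncard = k + n := by
  have hset : {z : V k n | ∃ j, z = .b j} = Set.range .b := by
    ext z; simp [eq_comm]
  rw [hset, Set.ncard_range_of_injective fun _ _ h => V.b.inj h, Nat.card_eq_fintype_card,
    Fintype.card_fin]

end DeltaL

open SimpleGraph in
theorem stmt15 (k : ℕ) (hk : 2 ≤ k) :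
    (((DeltaL k 1).deleteEdges {s(V.a ⟨0, by omega⟩, V.b ⟨0, by omega⟩)}).dist
        V.c (V.b ⟨0, by omega⟩) = 3) ∧
    (((DeltaL k 1).deleteEdges {s(V.a ⟨0, by omega⟩, V.b (Fin.last k))}).dist
        V.c (V.b (Fin.last k)) = 3) ∧
    (((DeltaL k 1).deleteEdges
        {s(V.a ⟨0, by omega⟩, V.b ⟨0, by omega⟩),
         s(V.a ⟨0, by omega⟩, V.b (Fin.last k))}).dist V.c (V.b ⟨0, by omega⟩) = 3) ∧
    ({z : V k 1 | z = V.c ∨ ∃ i, z = V.a i}.ncard = k + 1) ∧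
    ({z : V k 1 | ∃ j, z = V.b j}.ncard = k + 1) ∧
    (k + 1 < 2 ^ (k + 1)) := by
  have hk0 : 0 < k := by omega
  have hb0 : (DeltaL k 1).commonNeighbors .c (.b ⟨0, by omega⟩) ⊆ {.a ⟨0, hk0⟩} :=
    DeltaL.commonNeighbors_c_b_subset hk0 (by simp [DeltaL, adj])
  have hbk : (DeltaL k 1).commonNeighbors .c (.b (Fin.last k)) ⊆ {.a ⟨0, hk0⟩} :=
    DeltaL.commonNeighbors_c_b_subset hk0 (by simp [DeltaL, adj])
  refine ⟨?_, ?_, ?_, DeltaL.ncard_c_or_a, DeltaL.ncard_b, Nat.lt_two_pow_self⟩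
  · refine dist_eq_three_of_adj (by simp) (by simp [DeltaL, adj])
      (commonNeighbors_deleteEdges_eq_empty hb0 rfl)
      (x := .a ⟨1, hk⟩) (y := .b ⟨1, by omega⟩) ?_ ?_ ?_ <;>
    simp [DeltaL, adj, Fin.ext_iff]
  · refine dist_eq_three_of_adj (by simp) (by simp [DeltaL, adj])
      (commonNeighbors_deleteEdges_eq_empty hbk rfl)
      (x := .a ⟨0, hk0⟩) (y := .b ⟨0, by omega⟩) ?_ ?_ ?_ <;>
    simp [DeltaL, adj, Fin.ext_iff, hk0.ne]
  · refine dist_eq_three_of_adj (by simp) (by simp [DeltaL, adj])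
      (commonNeighbors_deleteEdges_eq_empty hb0 (Set.mem_insert _ _))
      (x := .a ⟨1, hk⟩) (y := .b ⟨1, by omega⟩) ?_ ?_ ?_ <;>
    simp [DeltaL, adj, Fin.ext_iff]
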